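/- arXiv:2112.06328 — 2 statements merged into one kernel-verified Lean document; each statement's English description precedes it below -/
import Mathlib

section
/- Let p ≥ 5 be a prime and let r be an integer with 1 ≤ r ≤ p-1 such that r is a quadratic nonresidue modulo p (i.e., there is no integer x with x^2 ≡ r (mod p)). Then for all integers n ≥ 0, d_{p-1}(pn+r) ≡ 0 (mod p). -/
/-- `elongatedDiamond k n` (written `d_k(n)` in the paper) is the coefficient of `q^n` in the
formal power series `∏_{i ≥ 1} (1 - q^(2i))^k / ∏_{i ≥ 1} (1 - q^i)^(3k+1)`.
Since every factor with index `i > n` is congruent to `1` modulo `q^(n+1)`, this coefficient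
equals the coefficient of `q^n` in the finite product over `1 ≤ i ≤ n`. -/
noncomputable def elongatedDiamond (k n : ℕ) : ℤ :=
  PowerSeries.coeff (R := ℤ) n
    (∏ i ∈ Finset.Icc 1 n,
      ((1 - (PowerSeries.X : PowerSeries ℤ) ^ (2 * i)) ^ k *
        (PowerSeries.invOfUnit (1 - (PowerSeries.X : PowerSeries ℤ) ^ i) 1) ^ (3 * k + 1)))

section GbPart
open Polynomial

noncomputable def Gb : ℕ → ℕ → Polynomial ℤ
  | 0, 0 => 1
  | 0, _ + 1 => 0
  | _ + 1, 0 => 1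
  | n + 1, k + 1 => Gb n k + X ^ (k + 1) * Gb n (k + 1)

@[simp] lemma Gb_zero_succ (k : ℕ) : Gb 0 (k + 1) = 0 := rfl
lemma Gb_pascal (n k : ℕ) : Gb (n + 1) (k + 1) = Gb n k + X ^ (k + 1) * Gb n (k + 1) := rfl

@[simp] lemma Gb_zero_right (n : ℕ) : Gb n 0 = 1 := by cases n <;> rfl

lemma Gb_eq_zero : ∀ {n k : ℕ}, n < k → Gb n k = 0 := by
  intro n
  induction n with
  | zero => intro k h; obtain ⟨j, rfl⟩ : ∃ j, k = j + 1 := ⟨k - 1, by omega⟩; simp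
  | succ n ih =>
    intro k h
    obtain ⟨j, rfl⟩ : ∃ j, k = j + 1 := ⟨k - 1, by omega⟩
    rw [Gb_pascal, ih (by omega), ih (by omega)]; ring

@[simp] lemma Gb_diag (n : ℕ) : Gb n n = 1 := by
  induction n with
  | zero => rfl
  | succ n ih => rw [Gb_pascal, ih, Gb_eq_zero (by omega)]; ring

lemma Gb_pascal' : ∀ (n k : ℕ), k ≤ n →
    Gb (n + 1) (k + 1) = X ^ (n - k) * Gb n k + Gb n (k + 1) := by
  intro n
  induction n with
  | zero =>
    intro k hk
    interval_cases k
    simp [Gb_pascal]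
  | succ n ih =>
    intro k hk
    rcases Nat.eq_or_lt_of_le hk with rfl | hlt
    · rw [Gb_diag, Gb_eq_zero (Nat.lt_succ_self _), Nat.sub_self,
        Gb_pascal, Gb_diag, Gb_eq_zero (Nat.lt_succ_self _)]
      ring
    · rcases Nat.eq_zero_or_pos k with rfl | hkpos
      · rw [Gb_pascal (n+1) 0]
        conv_lhs => rw [ih 0 (by omega)]
        conv_rhs => rw [Gb_pascal n 0]
        simp only [Gb_zero_right, Nat.sub_zero, pow_one, pow_succ]
        ring
      · obtain ⟨j, rfl⟩ : ∃ j, k = j + 1 := ⟨k - 1, by omega⟩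
        rw [Gb_pascal (n+1) (j+1)]
        conv_lhs => rw [ih j (by omega), ih (j+1) (by omega)]
        conv_rhs => rw [Gb_pascal n j, Gb_pascal n (j+1)]
        have e : n - j = (n - (j+1)) + 1 := by omega
        have e2 : n + 1 - (j + 1) = (n - (j+1)) + 1 := by omega
        rw [e, e2, pow_succ]
        ring

lemma Gb_ratio (k : ℕ) : ∀ m : ℕ,
    (∏ i ∈ Finset.Icc 1 k, (1 - X ^ i)) * Gb (m + k) k
      = ∏ i ∈ Finset.Icc (m + 1) (m + k), (1 - X ^ i : Polynomial ℤ) := by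
  induction k with
  | zero => intro m; simp
  | succ k ihk =>
    intro m
    induction m with
    | zero =>
      simp only [Nat.zero_add, Gb_diag, mul_one]
    | succ m ihm =>
      have hdef : Gb (m + 1 + (k + 1)) (k + 1)
          = Gb (m + k + 1) k + X ^ (k + 1) * Gb (m + k + 1) (k + 1) := by
        have h : m + 1 + (k + 1) = (m + k + 1) + 1 := by omega
        rw [h, Gb_pascal]
      rw [hdef, mul_add]
      have e1 : (∏ i ∈ Finset.Icc 1 (k+1), (1 - X ^ i : Polynomial ℤ))
          = (∏ i ∈ Finset.Icc 1 k, (1 - X ^ i)) * (1 - X ^ (k+1)) :=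
        Finset.prod_Icc_succ_top (by omega) _
      have h1 : (∏ i ∈ Finset.Icc 1 (k+1), (1 - X ^ i : Polynomial ℤ)) * Gb (m + k + 1) k
          = (1 - X ^ (k+1)) * ∏ i ∈ Finset.Icc (m + 1 + 1) (m + 1 + k), (1 - X ^ i) := by
        rw [e1]
        have h : m + k + 1 = (m + 1) + k := by omega
        rw [h, mul_right_comm, ihk (m+1), mul_comm]
      have h2 : (∏ i ∈ Finset.Icc 1 (k+1), (1 - X ^ i : Polynomial ℤ))
            * (X ^ (k+1) * Gb (m + k + 1) (k + 1))
          = X ^ (k+1) * ∏ i ∈ Finset.Icc (m + 1) (m + (k + 1)), (1 - X ^ i) := by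
        have h : m + k + 1 = m + (k + 1) := by omega
        rw [h, ← mul_assoc, mul_comm _ (X ^ (k+1)), mul_assoc, ihm]
      rw [h1, h2]
      have e2 : (∏ i ∈ Finset.Icc (m+1) (m + (k + 1)), (1 - X ^ i : Polynomial ℤ))
          = (1 - X ^ (m+1)) * ∏ i ∈ Finset.Icc (m + 1 + 1) (m + 1 + k), (1 - X ^ i) := by
        have h : m + (k + 1) = m + 1 + k := by omega
        rw [h, ← Finset.mul_prod_Ioc_eq_prod_Icc (show m + 1 ≤ m + 1 + k by omega),
          ← Finset.Icc_add_one_left_eq_Ioc]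
      have e3 : (∏ i ∈ Finset.Icc (m + 1 + 1) (m + 1 + (k + 1)), (1 - X ^ i : Polynomial ℤ))
          = (∏ i ∈ Finset.Icc (m + 1 + 1) (m + 1 + k), (1 - X ^ i)) * (1 - X ^ (m + 1 + k + 1)) := by
        have h : m + 1 + (k + 1) = (m + 1 + k) + 1 := by omega
        rw [h, Finset.prod_Icc_succ_top (by omega)]
      rw [e2, e3]
      ring

end GbPart

section RothePart
open Polynomial Finset

/-- Rothe's q-binomial theorem, element level. -/
lemma rothe {A : Type*} [CommRing A] (a q : A) (N : ℕ) :
    ∏ i ∈ range N, (1 + a * q ^ i)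
      = ∑ k ∈ range (N + 1), q ^ k.choose 2 * a ^ k * Polynomial.aeval q (Gb N k) := by
  induction N with
  | zero => simp [Gb_zero_right]
  | succ N ih =>
    rw [prod_range_succ, ih]
    have h0 : (q:A) ^ Nat.choose 0 2 * a ^ 0 * Polynomial.aeval q (Gb (N+1) 0) = 1 := by
      simp [Gb_zero_right]
    rw [sum_range_succ'
      (f := fun k => q ^ k.choose 2 * a ^ k * Polynomial.aeval q (Gb (N+1) k)) (N+1), h0]
    have hsplit : ∀ k ∈ range (N + 1),
        q ^ (k+1).choose 2 * a ^ (k+1) * Polynomial.aeval q (Gb (N+1) (k+1))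
          = q ^ (k+1).choose 2 * a ^ (k+1) * (q ^ (N - k) * Polynomial.aeval q (Gb N k))
            + q ^ (k+1).choose 2 * a ^ (k+1) * Polynomial.aeval q (Gb N (k+1)) := by
      intro k hk
      rw [Gb_pascal' N k (by simpa using Nat.lt_succ_iff.mp (mem_range.mp hk))]
      rw [map_add, map_mul, map_pow, Polynomial.aeval_X]
      ring
    rw [sum_congr rfl hsplit, sum_add_distrib]
    have e1 : ∑ k ∈ range (N+1),
        q ^ (k+1).choose 2 * a ^ (k+1) * (q ^ (N - k) * Polynomial.aeval q (Gb N k))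
        = (∑ k ∈ range (N + 1), q ^ k.choose 2 * a ^ k * Polynomial.aeval q (Gb N k)) * (a * q ^ N) := by
      rw [sum_mul]
      refine sum_congr rfl fun k hk => ?_
      have hkN : k ≤ N := Nat.lt_succ_iff.mp (mem_range.mp hk)
      have hc : (k+1).choose 2 + (N - k) = k.choose 2 + N := by
        rw [Nat.choose_succ_succ, Nat.choose_one_right]
        simp only [show Nat.succ 1 = 2 from rfl]
        omega
      calc q ^ (k+1).choose 2 * a ^ (k+1) * (q ^ (N - k) * Polynomial.aeval q (Gb N k))
          = q ^ ((k+1).choose 2 + (N-k)) * a ^ (k+1) * Polynomial.aeval q (Gb N k) := by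
            rw [pow_add]; ring
        _ = q ^ (k.choose 2 + N) * a ^ (k+1) * Polynomial.aeval q (Gb N k) := by rw [hc]
        _ = q ^ k.choose 2 * a ^ k * Polynomial.aeval q (Gb N k) * (a * q ^ N) := by
            rw [pow_add]; ring
    have e2 : ∑ k ∈ range (N+1),
        q ^ (k+1).choose 2 * a ^ (k+1) * Polynomial.aeval q (Gb N (k+1)) + 1
        = ∑ k ∈ range (N + 1), q ^ k.choose 2 * a ^ k * Polynomial.aeval q (Gb N k) := by
      rw [sum_range_succ
        (f := fun k => q ^ (k+1).choose 2 * a ^ (k+1) * Polynomial.aeval q (Gb N (k+1))) N]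
      rw [Gb_eq_zero (Nat.lt_succ_self N)]
      rw [sum_range_succ'
        (f := fun k => q ^ k.choose 2 * a ^ k * Polynomial.aeval q (Gb N k)) N]
      simp [Gb_zero_right]
    rw [e1, mul_add, mul_one, ← e2]
    ring

end RothePart

section LaurentPart
open Polynomial Finset LaurentPolynomial

lemma T_sum {s : Finset ℕ} (f : ℕ → ℤ) :
    (T (∑ i ∈ s, f i) : LaurentPolynomial ℤ) = ∏ i ∈ s, T (f i) := by
  classical
  induction s using Finset.cons_induction with
  | empty => simp
  | cons a s ha ih => rw [Finset.sum_cons, Finset.prod_cons, T_add, ih]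

lemma oddsum (M : ℕ) : ∑ i ∈ range M, (2 * (i:ℤ) + 1) = (M:ℤ)^2 := by
  induction M with
  | zero => simp
  | succ M ih => rw [sum_range_succ, ih]; push_cast; ring

lemma two_choose_two (k : ℕ) : ((k.choose 2 : ℤ)) * 2 = (k:ℤ) * ((k:ℤ) - 1) := by
  induction k with
  | zero => simp
  | succ k ih =>
    rw [Nat.choose_succ_succ, Nat.choose_one_right]
    push_cast
    push_cast at ih
    linarith

/-- The key Gauss theta identity in Laurent polynomials. -/
lemma gauss_laurent (M : ℕ) :
    ∑ k ∈ range (2*M + 1), ((-1 : LaurentPolynomial ℤ))^(M + k) * T (((k:ℤ) - M)^2)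
        * Polynomial.aeval (T 2) (Gb (2*M) k)
      = ∏ i ∈ range M, (1 - T (2*(i:ℤ)+1))^2 := by
  have base := rothe (A := LaurentPolynomial ℤ) (-T (1 - 2*(M:ℤ))) (T 2) (2*M)
  have lhs_eq : ∏ i ∈ range (2*M), ((1:LaurentPolynomial ℤ) + (-T (1 - 2*(M:ℤ))) * (T 2) ^ i)
      = ∏ i ∈ range (2*M), (1 - T (2*(i:ℤ) + 1 - 2*(M:ℤ))) := by
    refine prod_congr rfl fun i _ => ?_
    rw [T_pow, neg_mul, ← T_add, sub_eq_add_neg]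
    congr 3
    ring
  have key : ∀ k, T ((M:ℤ)^2) * ((T 2 : LaurentPolynomial ℤ) ^ k.choose 2
        * (-T (1 - 2*(M:ℤ))) ^ k * Polynomial.aeval (T 2) (Gb (2*M) k))
      = (-1)^k * T (((k:ℤ) - M)^2) * Polynomial.aeval (T 2) (Gb (2*M) k) := by
    intro k
    have expo : (M:ℤ)^2 + (k.choose 2 : ℤ) * 2 + (k:ℤ) * (1 - 2*(M:ℤ)) = ((k:ℤ) - M)^2 := by
      linear_combination two_choose_two k
    have e1 : ((-T (1 - 2*(M:ℤ)))^k : LaurentPolynomial ℤ)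
        = (-1)^k * T ((k:ℤ) * (1 - 2*(M:ℤ))) := by rw [neg_pow, T_pow]
    have e2 : ((T 2 : LaurentPolynomial ℤ)) ^ k.choose 2 = T ((k.choose 2 : ℤ) * 2) := by
      rw [T_pow]
    have e3 : (T ((M:ℤ)^2) : LaurentPolynomial ℤ) * T ((k.choose 2:ℤ)*2)
        * T ((k:ℤ)*(1-2*(M:ℤ))) = T (((k:ℤ)-M)^2) := by
      rw [← T_add, ← T_add, expo]
    rw [e1, e2, ← e3]
    ring
  -- product half
  have prodpart : T ((M:ℤ)^2) * ∏ i ∈ range (2*M), ((1:LaurentPolynomial ℤ) - T (2*(i:ℤ) + 1 - 2*(M:ℤ)))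
      = (-1)^M * ∏ i ∈ range M, (1 - T (2*(i:ℤ)+1))^2 := by
    have hsplit : ∏ i ∈ range (2*M), ((1:LaurentPolynomial ℤ) - T (2*(i:ℤ) + 1 - 2*(M:ℤ)))
        = (∏ i ∈ range M, (1 - T (2*(i:ℤ) + 1 - 2*(M:ℤ))))
          * ∏ i ∈ range M, (1 - T (2*(i:ℤ)+1)) := by
      rw [show 2*M = M + M from by omega, prod_range_add]
      congr 1
      refine prod_congr rfl fun i _ => ?_
      congr 1
      congr 1
      push_cast
      ring
    have hT : (T ((M:ℤ)^2) : LaurentPolynomial ℤ) = ∏ i ∈ range M, T (2*((M-1-i:ℕ):ℤ)+1) := by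
      rw [← oddsum, T_sum]
      exact (prod_range_reflect (fun i => (T (2*(i:ℤ)+1) : LaurentPolynomial ℤ)) M).symm
    have hfirst : T ((M:ℤ)^2) * (∏ i ∈ range M, ((1:LaurentPolynomial ℤ) - T (2*(i:ℤ) + 1 - 2*(M:ℤ))))
        = (-1)^M * ∏ i ∈ range M, (1 - T (2*(i:ℤ)+1)) := by
      rw [hT, ← prod_mul_distrib]
      have hfac : ∀ i ∈ range M, (T (2*((M-1-i:ℕ):ℤ)+1) : LaurentPolynomial ℤ)
            * (1 - T (2*(i:ℤ) + 1 - 2*(M:ℤ)))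
          = -1 * (1 - T (2*((M-1-i:ℕ):ℤ)+1)) := by
        intro i hi
        have hiM : i < M := mem_range.mp hi
        have hcast : ((M - 1 - i : ℕ) : ℤ) = (M:ℤ) - 1 - i := by omega
        rw [hcast, mul_sub, mul_one, ← T_add,
          show 2*((M:ℤ)-1-i)+1 + (2*(i:ℤ) + 1 - 2*(M:ℤ)) = 0 from by ring, T_zero]
        ring
      rw [prod_congr rfl hfac, prod_mul_distrib, prod_const, card_range]
      congr 1
      exact prod_range_reflect (fun i => (1 - T (2*(i:ℤ)+1) : LaurentPolynomial ℤ)) M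
    rw [hsplit, ← mul_assoc, hfirst]
    rw [mul_assoc, ← prod_mul_distrib]
    congr 1
    exact prod_congr rfl fun i _ => (sq _).symm
  -- assemble
  calc ∑ k ∈ range (2*M + 1), ((-1 : LaurentPolynomial ℤ))^(M + k) * T (((k:ℤ) - M)^2)
        * Polynomial.aeval (T 2) (Gb (2*M) k)
      = (-1)^M * ∑ k ∈ range (2*M + 1), ((-1 : LaurentPolynomial ℤ))^k * T (((k:ℤ) - M)^2)
        * Polynomial.aeval (T 2) (Gb (2*M) k) := by
        rw [mul_sum]
        refine sum_congr rfl fun k _ => ?_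
        rw [pow_add]; ring
    _ = (-1)^M * (T ((M:ℤ)^2) * ∑ k ∈ range (2*M + 1), (T 2 : LaurentPolynomial ℤ) ^ k.choose 2
        * (-T (1 - 2*(M:ℤ))) ^ k * Polynomial.aeval (T 2) (Gb (2*M) k)) := by
        conv_rhs => rw [Finset.mul_sum]
        congr 1
        exact (sum_congr rfl fun k _ => (key k).symm)
    _ = (-1)^M * (T ((M:ℤ)^2) * ∏ i ∈ range (2*M), (1 - T (2*(i:ℤ) + 1 - 2*(M:ℤ)))) := by
        congr 2
        exact base.symm.trans lhs_eq
    _ = (-1)^M * ((-1)^M * ∏ i ∈ range M, (1 - T (2*(i:ℤ)+1))^2) := by rw [prodpart]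
    _ = ∏ i ∈ range M, (1 - T (2*(i:ℤ)+1))^2 := by
        rw [← mul_assoc, ← pow_add]
        simp [Even.neg_one_pow (⟨M, rfl⟩ : Even (M + M))]

end LaurentPart

section BridgePart
open Polynomial Finset LaurentPolynomial

lemma natAbs_sq_cast (z : ℤ) : ((z.natAbs ^ 2 : ℕ) : ℤ) = z ^ 2 := by
  push_cast
  exact sq_abs z

lemma Gb_ratio2 (k m : ℕ) :
    (∏ i ∈ Finset.Icc 1 k, (1 - X ^ (2*i))) * (Gb (m + k) k).comp (X^2)
      = ∏ i ∈ Finset.Icc (m+1) (m+k), (1 - X^(2*i) : Polynomial ℤ) := by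
  have h := congrArg (Polynomial.aeval ((X : Polynomial ℤ)^2)) (Gb_ratio k m)
  rw [map_mul, map_prod, map_prod] at h
  simp only [map_sub, map_one, map_pow, Polynomial.aeval_X, ← pow_mul] at h
  rw [comp_eq_aeval]
  exact h

lemma toLaurent_comp_sq (P : Polynomial ℤ) :
    Polynomial.toLaurent (P.comp (X^2)) = Polynomial.aeval (T 2) P := by
  rw [comp_eq_aeval]
  have h := Polynomial.aeval_algHom_apply
    ((Polynomial.toLaurent (R := ℤ)).toIntAlgHom) ((X : Polynomial ℤ)^2) P
  have hX2 : (Polynomial.toLaurent (R := ℤ)).toIntAlgHom ((X : Polynomial ℤ)^2) = T 2 := by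
    show Polynomial.toLaurent ((X : Polynomial ℤ)^2) = T 2
    rw [Polynomial.toLaurent_X_pow]
    norm_num
  rw [hX2] at h
  exact h.symm

lemma gauss_poly (M : ℕ) :
    ∑ k ∈ range (2*M+1), ((-1 : Polynomial ℤ))^(M+k)
        * X^((((k:ℤ) - M).natAbs)^2) * (Gb (2*M) k).comp (X^2)
      = ∏ i ∈ range M, (1 - X^(2*i+1))^2 := by
  apply Polynomial.toLaurent_injective
  rw [map_sum, map_prod]
  have hL : ∀ k, Polynomial.toLaurent (((-1 : Polynomial ℤ))^(M+k)
        * X^((((k:ℤ) - M).natAbs)^2) * (Gb (2*M) k).comp (X^2))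
      = ((-1 : LaurentPolynomial ℤ))^(M + k) * T (((k:ℤ) - M)^2)
        * Polynomial.aeval (T 2) (Gb (2*M) k) := by
    intro k
    rw [map_mul, map_mul, map_pow, map_neg, map_one, Polynomial.toLaurent_X_pow,
      toLaurent_comp_sq, natAbs_sq_cast]
  have hR : ∀ i : ℕ, Polynomial.toLaurent (((1 - X^(2*i+1) : Polynomial ℤ))^2)
      = ((1 : LaurentPolynomial ℤ) - T (2*(i:ℤ)+1))^2 := by
    intro i
    rw [map_pow, map_sub, map_one, Polynomial.toLaurent_X_pow]
    norm_num
  rw [Finset.sum_congr rfl (fun k _ => hL k), Finset.prod_congr rfl (fun i _ => hR i)]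
  exact gauss_laurent M

end BridgePart

section PSPart
open Finset PowerSeries

section Helpers
variable {R : Type*} [CommRing R]

lemma unit_rel (m : ℕ) (hm : m ≠ 0) :
    ((1 : R⟦X⟧) - X ^ m) * PowerSeries.invOfUnit (1 - X ^ m) 1 = 1 := by
  apply PowerSeries.mul_invOfUnit
  simp [hm]

lemma one_sub_pow_cong (d m : ℕ) (h : d ≤ m) :
    (X : R⟦X⟧)^d ∣ (1 - X^m) - 1 := by
  refine ⟨-X^(m-d), ?_⟩
  have e : (X : R⟦X⟧)^d * X^(m-d) = X^m := by rw [← pow_add, Nat.add_sub_cancel' h]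
  calc (1 : R⟦X⟧) - X^m - 1 = -(X^d * X^(m-d)) := by rw [e]; ring
    _ = X^d * -X^(m-d) := by ring

lemma inv_sub_one_cong (d m : ℕ) (hm : m ≠ 0) (h : d ≤ m) :
    (X : R⟦X⟧)^d ∣ PowerSeries.invOfUnit (1 - X^m) 1 - 1 := by
  have h1 := unit_rel (R := R) m hm
  refine ⟨PowerSeries.invOfUnit (1 - X^m) 1 * X^(m-d), ?_⟩
  have : (X : R⟦X⟧)^d * X^(m-d) = X^m := by rw [← pow_add, Nat.add_sub_cancel' h]
  calc PowerSeries.invOfUnit (1 - X^m) 1 - 1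
      = PowerSeries.invOfUnit ((1:R⟦X⟧) - X^m) 1 * X^m := by linear_combination h1
    _ = X^d * (PowerSeries.invOfUnit ((1:R⟦X⟧) - X^m) 1 * X^(m-d)) := by rw [← this]; ring

lemma prod_sub_one_cong {ι : Type*} (s : Finset ι) (f : ι → R⟦X⟧) (d : ℕ)
    (h : ∀ i ∈ s, (X : R⟦X⟧)^d ∣ f i - 1) : (X : R⟦X⟧)^d ∣ (∏ i ∈ s, f i) - 1 := by
  classical
  induction s using Finset.cons_induction with
  | empty => simp
  | cons a s ha ih =>
    rw [Finset.prod_cons]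
    have h1 := h a (Finset.mem_cons_self a s)
    have h2 := ih (fun i hi => h i (Finset.mem_cons.mpr (Or.inr hi)))
    have e : f a * (∏ i ∈ s, f i) - 1
        = (f a - 1) * (∏ i ∈ s, f i) + ((∏ i ∈ s, f i) - 1) := by ring
    rw [e]
    exact dvd_add (h1.mul_right _) h2

lemma cancel_unit_cong {a b c c' : R⟦X⟧} (hc : c * c' = 1) (d : ℕ)
    (h : (X : R⟦X⟧)^d ∣ a * c - b * c) : (X : R⟦X⟧)^d ∣ a - b := by
  have e : a - b = (a * c - b * c) * c' := by
    calc a - b = (a - b) * (c * c') := by rw [hc, mul_one]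
      _ = (a * c - b * c) * c' := by ring
  rw [e]
  exact h.mul_right _

lemma coeff_eq_of_cong {f g : R⟦X⟧} {d n : ℕ} (h : (X : R⟦X⟧)^d ∣ f - g) (hn : n < d) :
    PowerSeries.coeff (R := R) n f = PowerSeries.coeff (R := R) n g := by
  have := PowerSeries.X_pow_dvd_iff.mp h n hn
  rw [map_sub, sub_eq_zero] at this
  exact this

lemma even_odd_split (K : ℕ) :
    (∏ j ∈ Finset.Icc 1 (2*K), ((1:R⟦X⟧) - X ^ j)^2)
      = (∏ i ∈ range K, (1 - X^(2*i+1))^2) * (∏ i ∈ Finset.Icc 1 K, (1 - X^(2*i)))^2 := by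
  induction K with
  | zero => simp
  | succ K ih =>
    have h1 : 2*(K+1) = (2*K+1)+1 := by ring
    rw [h1, Finset.prod_Icc_succ_top (by omega), Finset.prod_Icc_succ_top (by omega),
      ih, prod_range_succ, Finset.prod_Icc_succ_top (show 1 ≤ K + 1 by omega)]
    have h2 : 2*K+1+1 = 2*(K+1) := by ring
    rw [h2]
    ring
end Helpers

theorem theta_vanish (K b : ℕ) (hbK : b ≤ K) (hsq : ∀ x : ℕ, x * x ≠ b) :
    (PowerSeries.coeff (R := ℤ) b) (∏ i ∈ Finset.Icc 1 K,
      ((1 - X ^ i) ^ 2 * PowerSeries.invOfUnit (1 - X ^ (2*i)) 1)) = 0 := by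
  classical
  have hb : 1 ≤ b := by
    rcases Nat.eq_zero_or_pos b with rfl | h
    · exact absurd rfl (hsq 0)
    · exact h
  set z : ℕ → ℤ⟦X⟧ := fun m => PowerSeries.invOfUnit (1 - X^m) 1 with hz
  set C : ℤ⟦X⟧ := ∏ i ∈ Finset.Icc 1 K, (1 - X^(2*i)) with hC
  set P : ℤ⟦X⟧ := ∏ i ∈ Finset.Icc 1 K, ((1 - X ^ i) ^ 2 * z (2*i)) with hP
  have hCC' : C * (∏ i ∈ Finset.Icc 1 K, z (2*i)) = 1 := by
    rw [hC, ← prod_mul_distrib]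
    rw [Finset.prod_congr rfl (fun i hi => unit_rel (R := ℤ) (2*i)
      (by have := Finset.mem_Icc.mp hi; omega))]
    exact Finset.prod_const_one
  have hPC : P * C = ∏ i ∈ Finset.Icc 1 K, (1 - X^i)^2 := by
    rw [hP, hC, ← prod_mul_distrib]
    refine Finset.prod_congr rfl fun i hi => ?_
    have hi1 : 1 ≤ i := (Finset.mem_Icc.mp hi).1
    have := unit_rel (R := ℤ) (2*i) (by omega)
    calc (1 - X ^ i) ^ 2 * z (2*i) * (1 - X^(2*i))
        = (1 - X ^ i) ^ 2 * ((1 - X^(2*i)) * z (2*i)) := by ring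
      _ = (1 - X ^ i) ^ 2 := by rw [this, mul_one]
  set GG : ℕ → ℤ⟦X⟧ := fun k => ((Gb (2*K) k).comp (Polynomial.X^2) : ℤ⟦X⟧) with hGG
  have hbridge : ∀ p : Polynomial ℤ, Polynomial.coeToPowerSeries.ringHom (R := ℤ) p = (p : ℤ⟦X⟧) :=
    fun _ => rfl
  have gaussPS : (∑ k ∈ range (2*K+1), ((-1 : ℤ⟦X⟧))^(K+k)
        * X^((((k:ℤ) - K).natAbs)^2) * GG k)
      = ∏ i ∈ range K, (1 - X^(2*i+1))^2 := by
    have h := congrArg (Polynomial.coeToPowerSeries.ringHom (R := ℤ)) (gauss_poly K)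
    rw [map_sum, map_prod] at h
    simp only [map_mul, map_pow, map_sub, map_one, map_neg, hbridge, Polynomial.coe_mul,
      Polynomial.coe_pow, Polynomial.coe_sub, Polynomial.coe_one, Polynomial.coe_neg,
      Polynomial.coe_X] at h
    exact h
  have hPcong : (X : ℤ⟦X⟧)^(b+1) ∣ P - (∑ k ∈ range (2*K+1), ((-1 : ℤ⟦X⟧))^(K+k)
        * X^((((k:ℤ) - K).natAbs)^2) * GG k) * C := by
    apply cancel_unit_cong hCC' (b+1)
    rw [hPC]
    have hbig : (∑ k ∈ range (2*K+1), ((-1 : ℤ⟦X⟧))^(K+k)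
          * X^((((k:ℤ) - K).natAbs)^2) * GG k) * C * C
        = ∏ j ∈ Finset.Icc 1 (2*K), ((1:ℤ⟦X⟧) - X ^ j)^2 := by
      rw [gaussPS, even_odd_split]
      rw [hC]; ring
    rw [hbig]
    have hsplit : (∏ j ∈ Finset.Icc 1 (2*K), ((1:ℤ⟦X⟧) - X ^ j)^2)
        = (∏ j ∈ Finset.Icc 1 K, ((1:ℤ⟦X⟧) - X ^ j)^2)
          * ∏ j ∈ Finset.Ioc K (2*K), ((1:ℤ⟦X⟧) - X ^ j)^2 := by
      rw [show (1:ℕ) = 0 + 1 from rfl, Finset.Icc_add_one_left_eq_Ioc, Finset.Icc_add_one_left_eq_Ioc]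
      exact (Finset.prod_Ioc_consecutive _ (by omega) (by omega)).symm
    rw [hsplit]
    have hextra : (X : ℤ⟦X⟧)^(b+1) ∣ (∏ j ∈ Finset.Ioc K (2*K), ((1:ℤ⟦X⟧) - X ^ j)^2) - 1 := by
      apply prod_sub_one_cong
      intro i hi
      have hi' : K + 1 ≤ i := by have := Finset.mem_Ioc.mp hi; omega
      have h1 : (X : ℤ⟦X⟧)^(b+1) ∣ (1 - X^i) - 1 := one_sub_pow_cong _ _ (by omega)
      have e : ((1:ℤ⟦X⟧) - X^i)^2 - 1 = ((1 - X^i) - 1) * ((1 - X^i) + 1) := by ring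
      rw [e]
      exact h1.mul_right _
    have e2 : (∏ j ∈ Finset.Icc 1 K, ((1:ℤ⟦X⟧) - X ^ j)^2)
          - (∏ j ∈ Finset.Icc 1 K, ((1:ℤ⟦X⟧) - X ^ j)^2)
            * ∏ j ∈ Finset.Ioc K (2*K), ((1:ℤ⟦X⟧) - X ^ j)^2
        = -(((∏ j ∈ Finset.Ioc K (2*K), ((1:ℤ⟦X⟧) - X ^ j)^2) - 1)
            * ∏ j ∈ Finset.Icc 1 K, ((1:ℤ⟦X⟧) - X ^ j)^2) := by ring
    rw [e2]
    exact (hextra.mul_right _).neg_right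
  rw [show (PowerSeries.coeff (R := ℤ) b) P = (PowerSeries.coeff (R := ℤ) b)
      ((∑ k ∈ range (2*K+1), ((-1 : ℤ⟦X⟧))^(K+k)
        * X^((((k:ℤ) - K).natAbs)^2) * GG k) * C) from coeff_eq_of_cong hPcong (by omega)]
  rw [Finset.sum_mul, map_sum]
  apply Finset.sum_eq_zero
  intro k hk
  have hk' : k ≤ 2*K := by have := Finset.mem_range.mp hk; omega
  set j : ℕ := (((k:ℤ) - K)).natAbs with hj
  have hje : j * j ≠ b := hsq j
  set e : ℕ := j^2 with he'
  have hcore : (PowerSeries.coeff (R := ℤ) b) (X^e * (GG k * C)) = 0 := by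
    by_cases he : e ≤ b
    · have heN : e < b := by
        rcases Nat.lt_or_ge e b with h | h
        · exact h
        · exfalso; exact hje (by rw [← pow_two]; omega)
      obtain ⟨q, hq⟩ : ∃ q, q = j * j := ⟨j * j, rfl⟩
      have hqe : e = q := by rw [he', pow_two, hq]
      have h2j : 2 * j ≤ q + 1 := by
        have := two_mul_le_add_sq j 1
        rw [hq]; nlinarith [this]
      have hGGC : (X : ℤ⟦X⟧)^(b+1-e) ∣ GG k * C - 1 := by
        set U : ℤ⟦X⟧ := ∏ i ∈ Finset.Icc 1 k, (1 - X^(2*i)) with hU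
        have hUU' : U * (∏ i ∈ Finset.Icc 1 k, z (2*i)) = 1 := by
          rw [hU, ← prod_mul_distrib]
          rw [Finset.prod_congr rfl (fun i hi => unit_rel (R := ℤ) (2*i)
            (by have := Finset.mem_Icc.mp hi; omega))]
          exact Finset.prod_const_one
        apply cancel_unit_cong hUU' (b+1-e)
        have hratio : U * GG k = ∏ i ∈ Finset.Icc (2*K-k+1) (2*K), ((1:ℤ⟦X⟧) - X^(2*i)) := by
          have h := congrArg (Polynomial.coeToPowerSeries.ringHom (R := ℤ)) (Gb_ratio2 k (2*K-k))
          rw [show 2*K-k+k = 2*K from by omega] at h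
          rw [map_mul, map_prod, map_prod] at h
          simp only [map_sub, map_one, map_pow, hbridge, Polynomial.coe_sub,
            Polynomial.coe_one, Polynomial.coe_pow, Polynomial.coe_X] at h
          exact h
        set V : ℤ⟦X⟧ := ∏ i ∈ Finset.Icc (2*K-k+1) (2*K), ((1:ℤ⟦X⟧) - X^(2*i)) with hV
        have hstep : GG k * C * U = V * C := by rw [← hratio]; ring
        rw [hstep, one_mul]
        have hVone : (X : ℤ⟦X⟧)^(b+1-e) ∣ V - 1 := by
          apply prod_sub_one_cong
          intro i hi
          have hi' := Finset.mem_Icc.mp hi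
          apply one_sub_pow_cong
          rcases Nat.lt_or_ge k K with hkK | hkK
          · have : j = K - k := by omega
            omega
          · have : j = k - K := by omega
            omega
        have hCU : (X : ℤ⟦X⟧)^(b+1-e) ∣ C - U := by
          rcases le_or_gt k K with hkK | hkK
          · have hsp : C = U * ∏ i ∈ Finset.Ioc k K, ((1:ℤ⟦X⟧) - X^(2*i)) := by
              rw [hC, hU, show (1:ℕ) = 0 + 1 from rfl, Finset.Icc_add_one_left_eq_Ioc, Finset.Icc_add_one_left_eq_Ioc]
              exact (Finset.prod_Ioc_consecutive _ (by omega) (by omega)).symm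
            rw [hsp]
            have hE : (X : ℤ⟦X⟧)^(b+1-e) ∣ (∏ i ∈ Finset.Ioc k K, ((1:ℤ⟦X⟧) - X^(2*i))) - 1 := by
              apply prod_sub_one_cong
              intro i hi
              have hi' := Finset.mem_Ioc.mp hi
              apply one_sub_pow_cong
              have : j = K - k := by omega
              omega
            have e3 : U * (∏ i ∈ Finset.Ioc k K, ((1:ℤ⟦X⟧) - X^(2*i))) - U
                = ((∏ i ∈ Finset.Ioc k K, ((1:ℤ⟦X⟧) - X^(2*i))) - 1) * U := by ring
            rw [e3]
            exact hE.mul_right _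
          · have hsp : U = C * ∏ i ∈ Finset.Ioc K k, ((1:ℤ⟦X⟧) - X^(2*i)) := by
              rw [hC, hU, show (1:ℕ) = 0 + 1 from rfl, Finset.Icc_add_one_left_eq_Ioc, Finset.Icc_add_one_left_eq_Ioc]
              exact (Finset.prod_Ioc_consecutive _ (by omega) (by omega)).symm
            rw [hsp]
            have hE : (X : ℤ⟦X⟧)^(b+1-e) ∣ (∏ i ∈ Finset.Ioc K k, ((1:ℤ⟦X⟧) - X^(2*i))) - 1 := by
              apply prod_sub_one_cong
              intro i hi
              have hi' := Finset.mem_Ioc.mp hi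
              apply one_sub_pow_cong
              omega
            have e3 : C - C * (∏ i ∈ Finset.Ioc K k, ((1:ℤ⟦X⟧) - X^(2*i)))
                = -(((∏ i ∈ Finset.Ioc K k, ((1:ℤ⟦X⟧) - X^(2*i))) - 1) * C) := by ring
            rw [e3]
            exact (hE.mul_right _).neg_right
        have e4 : V * C - U = (V - 1) * C + (C - U) := by ring
        rw [e4]
        exact dvd_add (hVone.mul_right _) hCU
      have hle : b = (b - e) + e := by omega
      rw [hle, PowerSeries.coeff_X_pow_mul]
      rw [coeff_eq_of_cong hGGC (by omega)]
      rw [PowerSeries.coeff_one, if_neg (by omega)]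
    · have : (X : ℤ⟦X⟧)^(b+1) ∣ X^e * (GG k * C) := by
        refine Dvd.dvd.mul_right ?_ _
        exact pow_dvd_pow _ (by omega)
      exact PowerSeries.X_pow_dvd_iff.mp this b (by omega)
  have efin : ((-1 : ℤ⟦X⟧))^(K+k) * X^e * GG k * C = ((-1 : ℤ⟦X⟧))^(K+k) * (X^e * (GG k * C)) := by
    ring
  rw [show (((k:ℤ) - K)).natAbs^2 = e from rfl] at *
  rw [efin]
  rcases Nat.even_or_odd (K+k) with hpar | hpar
  · rw [Even.neg_one_pow hpar, one_mul, hcore]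
  · rw [Odd.neg_one_pow hpar, neg_one_mul, map_neg, hcore, neg_zero]

end PSPart

section MainPart
open Finset PowerSeries

section Supp
variable {R : Type*} [CommRing R]

def SuppDvd (p : ℕ) (f : R⟦X⟧) : Prop := ∀ m : ℕ, ¬ (p ∣ m) → PowerSeries.coeff (R := R) m f = 0

lemma suppDvd_one {p : ℕ} : SuppDvd p (1 : R⟦X⟧) := by
  intro m hm
  rw [PowerSeries.coeff_one, if_neg (fun h : m = 0 => hm (by simp [h]))]

lemma suppDvd_mul {p : ℕ} {f g : R⟦X⟧} (hf : SuppDvd p f) (hg : SuppDvd p g) :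
    SuppDvd p (f * g) := by
  intro m hm
  rw [PowerSeries.coeff_mul]
  apply Finset.sum_eq_zero
  rintro ⟨u, v⟩ huv
  have huvm : u + v = m := Finset.HasAntidiagonal.mem_antidiagonal.mp huv
  by_cases hu : p ∣ u
  · have hv : ¬ p ∣ v := fun h => hm (huvm ▸ Nat.dvd_add hu h)
    rw [hg v hv, mul_zero]
  · rw [hf u hu, zero_mul]

lemma suppDvd_prod {p : ℕ} {ι : Type*} (s : Finset ι) (f : ι → R⟦X⟧)
    (h : ∀ i ∈ s, SuppDvd p (f i)) : SuppDvd p (∏ i ∈ s, f i) := by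
  classical
  induction s using Finset.cons_induction with
  | empty => simpa using suppDvd_one
  | cons a s ha ih =>
    rw [Finset.prod_cons]
    exact suppDvd_mul (h a (Finset.mem_cons_self a s))
      (ih fun i hi => h i (Finset.mem_cons.mpr (Or.inr hi)))

lemma suppDvd_pow {p : ℕ} {f : R⟦X⟧} (hf : SuppDvd p f) (n : ℕ) : SuppDvd p (f ^ n) := by
  induction n with
  | zero => simpa using suppDvd_one
  | succ n ih => rw [pow_succ]; exact suppDvd_mul ih hf

lemma suppDvd_one_sub_pow {p t : ℕ} : SuppDvd p ((1 : R⟦X⟧) - X ^ (p * t)) := by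
  intro m hm
  rw [map_sub, PowerSeries.coeff_one, PowerSeries.coeff_X_pow,
    if_neg (fun h : m = 0 => hm (by simp [h])),
    if_neg (fun h : m = p*t => hm (by rw [h]; exact Dvd.intro t rfl)), sub_zero]

lemma suppDvd_inv {p : ℕ} {f g : R⟦X⟧} (hfg : f * g = 1) (hf : SuppDvd p f) : SuppDvd p g := by
  intro m
  induction m using Nat.strong_induction_on with
  | _ m ih =>
    intro hm
    have hm0 : m ≠ 0 := fun h => hm (h ▸ dvd_zero p)
    have h1 : PowerSeries.coeff (R := R) m (f * g) = 0 := by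
      rw [hfg, PowerSeries.coeff_one, if_neg hm0]
    rw [PowerSeries.coeff_mul] at h1
    rw [Finset.sum_eq_single_of_mem ((0:ℕ), m)
      (Finset.HasAntidiagonal.mem_antidiagonal.mpr (by omega)) ?_] at h1
    · -- h1 : coeff 0 f * coeff m g = 0
      have h0 : PowerSeries.coeff (R := R) 0 f * PowerSeries.coeff (R := R) 0 g = 1 := by
        have := congrArg (PowerSeries.coeff (R := R) 0) hfg
        rwa [PowerSeries.coeff_zero_eq_constantCoeff, map_mul, map_one,
          ← PowerSeries.coeff_zero_eq_constantCoeff] at this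
        
      calc PowerSeries.coeff (R := R) m g
          = (PowerSeries.coeff (R := R) 0 f * PowerSeries.coeff (R := R) 0 g) * PowerSeries.coeff (R := R) m g := by
            rw [h0, one_mul]
        _ = PowerSeries.coeff (R := R) 0 g * (PowerSeries.coeff (R := R) 0 f * PowerSeries.coeff (R := R) m g) := by
            ring
        _ = 0 := by rw [h1, mul_zero]
    · rintro ⟨u, v⟩ huv hne
      have huvm : u + v = m := Finset.HasAntidiagonal.mem_antidiagonal.mp huv
      by_cases hu : p ∣ u
      · have hu0 : u ≠ 0 := by
          rintro rfl
          exact hne (by simpa using huvm)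
        have hv : ¬ p ∣ v := fun h => hm (huvm ▸ Nat.dvd_add hu h)
        rw [ih v (by omega) hv, mul_zero]
      · rw [hf u hu, zero_mul]
end Supp

theorem d_p_sub_one_qnr (p : ℕ) (hp : Nat.Prime p) (hp5 : 5 ≤ p) (r : ℕ) (hr1 : 1 ≤ r)
    (hr2 : r ≤ p - 1)
    (hqnr : ¬ ∃ x : ℤ, x ^ 2 ≡ (r : ℤ) [ZMOD p]) :
    ∀ n : ℕ, (p : ℤ) ∣ elongatedDiamond (p - 1) (p * n + r) := by
  intro n
  haveI hFp : Fact p.Prime := ⟨hp⟩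
  set N := p * n + r with hNdef
  rw [← ZMod.intCast_zmod_eq_zero_iff_dvd]
  set ρ : ℤ →+* ZMod p := Int.castRingHom (ZMod p) with hρ
  haveI : CharP (PowerSeries (ZMod p)) p := by
    have hinj : Function.Injective (PowerSeries.C (R := ZMod p)) := by
      intro a b h
      simpa using congrArg (PowerSeries.constantCoeff (R := ZMod p)) h
    exact charP_of_injective_ringHom hinj p
  show ρ (PowerSeries.coeff (R := ℤ) N (∏ i ∈ Finset.Icc 1 N,
      ((1 - (X : ℤ⟦X⟧) ^ (2 * i)) ^ (p-1) *
        (PowerSeries.invOfUnit (1 - (X : ℤ⟦X⟧) ^ i) 1) ^ (3 * (p-1) + 1)))) = 0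
  rw [← PowerSeries.coeff_map]
  set S := PowerSeries (ZMod p)
  set I : ℕ → S := fun i => PowerSeries.map ρ (PowerSeries.invOfUnit (1 - X ^ i) 1) with hI'
  set Z : ℕ → S := fun i => PowerSeries.map ρ (PowerSeries.invOfUnit (1 - X ^ (2*i)) 1) with hZ'
  set W : ℕ → S := fun i => PowerSeries.invOfUnit (1 - X ^ (p*i)) 1 with hW'
  have hI : ∀ i : ℕ, i ≠ 0 → ((1:S) - X ^ i) * I i = 1 := by
    intro i hi
    have := congrArg (PowerSeries.map ρ) (unit_rel (R := ℤ) i hi)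
    rw [map_mul, map_sub, map_one, map_pow, PowerSeries.map_X] at this
    rw [hI']
    exact this
  have hZ : ∀ i : ℕ, i ≠ 0 → ((1:S) - X ^ (2*i)) * Z i = 1 := by
    intro i hi
    have := congrArg (PowerSeries.map ρ) (unit_rel (R := ℤ) (2*i) (by omega))
    rw [map_mul, map_sub, map_one, map_pow, PowerSeries.map_X] at this
    rw [hZ']
    exact this
  have hW : ∀ i : ℕ, i ≠ 0 → ((1:S) - X ^ (p*i)) * W i = 1 := by
    intro i hi
    exact unit_rel (R := ZMod p) (p*i) (by have := hp.pos; positivity)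
  have frob : ∀ m : ℕ, ((1:S) - X ^ m) ^ p = 1 - X ^ (p * m) := by
    intro m
    rw [sub_pow_char, one_pow, ← pow_mul, mul_comm m p]
  have hcancel : ∀ {a b c c' : S}, c * c' = 1 → a * c = b * c → a = b := by
    intro a b c c' hcc' h
    calc a = a * (c * c') := by rw [hcc', mul_one]
      _ = (a * c) * c' := by ring
      _ = (b * c) * c' := by rw [h]
      _ = b * (c * c') := by ring
      _ = b := by rw [hcc', mul_one]
  -- map the product into S
  have hmap : PowerSeries.map ρ (∏ i ∈ Finset.Icc 1 N,
      ((1 - (X : ℤ⟦X⟧) ^ (2 * i)) ^ (p-1) *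
        (PowerSeries.invOfUnit (1 - (X : ℤ⟦X⟧) ^ i) 1) ^ (3 * (p-1) + 1)))
      = ∏ i ∈ Finset.Icc 1 N, (((1:S) - X ^ (2*i)) ^ (p-1) * (I i) ^ (3*(p-1)+1)) := by
    rw [map_prod]
    refine Finset.prod_congr rfl fun i _ => ?_
    rw [map_mul, map_pow, map_sub, map_one, map_pow, PowerSeries.map_X, map_pow]
  rw [hmap]
  -- per-factor rewrite
  have hfactor : ∀ i ∈ Finset.Icc 1 N,
      ((1:S) - X ^ (2*i)) ^ (p-1) * (I i) ^ (3*(p-1)+1)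
        = (((1:S) - X ^ (p*(2*i))) * (W i)^3) * (((1:S) - X ^ i)^2 * Z i) := by
    intro i hi
    have hi1 : i ≠ 0 := by have := (Finset.mem_Icc.mp hi).1; omega
    set c : S := ((1:S) - X ^ (2*i)) * ((1:S) - X ^ i) ^ (3*(p-1)+1) with hc
    have hcc' : c * (Z i * (I i) ^ (3*(p-1)+1)) = 1 := by
      calc c * (Z i * (I i) ^ (3*(p-1)+1))
          = (((1:S) - X ^ (2*i)) * Z i) * ((((1:S) - X ^ i) * I i) ^ (3*(p-1)+1)) := by
            rw [hc, mul_pow]; ring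
        _ = 1 := by rw [hZ i hi1, hI i hi1, one_pow, mul_one]
    apply hcancel hcc'
    have lhs_eq : ((1:S) - X ^ (2*i)) ^ (p-1) * (I i) ^ (3*(p-1)+1) * c
        = 1 - X ^ (p*(2*i)) := by
      calc ((1:S) - X ^ (2*i)) ^ (p-1) * (I i) ^ (3*(p-1)+1) * c
          = (((1:S) - X ^ (2*i)) ^ (p-1) * ((1:S) - X ^ (2*i)) ^ 1)
            * ((((1:S) - X ^ i) * I i) ^ (3*(p-1)+1)) := by rw [hc, mul_pow]; ring
        _ = ((1:S) - X ^ (2*i)) ^ p := by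
            rw [hI i hi1, one_pow, mul_one, ← pow_add, show p - 1 + 1 = p from by omega]
        _ = 1 - X ^ (p*(2*i)) := frob (2*i)
    have rhs_eq : (((1:S) - X ^ (p*(2*i))) * (W i)^3) * (((1:S) - X ^ i)^2 * Z i) * c
        = 1 - X ^ (p*(2*i)) := by
      have hc1 : ((1:S) - X ^ i)^2 * ((1:S) - X ^ i) ^ (3*(p-1)+1) = (((1:S) - X ^ i)^p)^3 := by
        rw [← pow_add, ← pow_mul, show 2 + (3*(p-1)+1) = p*3 from by omega]
      calc (((1:S) - X ^ (p*(2*i))) * (W i)^3) * (((1:S) - X ^ i)^2 * Z i) * c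
          = ((1:S) - X ^ (p*(2*i)))
            * ((((1:S) - X ^ i)^2 * ((1:S) - X ^ i) ^ (3*(p-1)+1)) * (W i)^3)
            * (((1:S) - X ^ (2*i)) * Z i) := by rw [hc]; ring
        _ = ((1:S) - X ^ (p*(2*i)))
            * (((((1:S) - X ^ i)^p) * W i)^3) * (((1:S) - X ^ (2*i)) * Z i) := by
            rw [hc1, ← mul_pow]
        _ = 1 - X ^ (p*(2*i)) := by
            rw [frob i, hW i hi1, one_pow, hZ i hi1, mul_one, mul_one]
    rw [lhs_eq, rhs_eq]
  rw [Finset.prod_congr rfl hfactor, Finset.prod_mul_distrib]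
  -- coefficient of product
  rw [PowerSeries.coeff_mul]
  apply Finset.sum_eq_zero
  rintro ⟨a, b⟩ hab
  have hab' : a + b = N := Finset.HasAntidiagonal.mem_antidiagonal.mp hab
  by_cases hpa : p ∣ a
  · -- second factor vanishes
    have hBmap : (∏ i ∈ Finset.Icc 1 N, (((1:S) - X ^ i)^2 * Z i))
        = PowerSeries.map ρ (∏ i ∈ Finset.Icc 1 N,
          ((1 - (X:ℤ⟦X⟧) ^ i) ^ 2 * PowerSeries.invOfUnit (1 - (X:ℤ⟦X⟧) ^ (2*i)) 1)) := by
      rw [map_prod]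
      refine Finset.prod_congr rfl fun i _ => ?_
      rw [map_mul, map_pow, map_sub, map_one, map_pow, PowerSeries.map_X]
    have hsqb : ∀ x : ℕ, x * x ≠ b := by
      intro x hx
      apply hqnr
      obtain ⟨c, hc⟩ := hpa
      refine ⟨(x:ℤ), Int.modEq_iff_dvd.mpr ⟨(c:ℤ) - n, ?_⟩⟩
      have h1 : (a:ℤ) + (b:ℤ) = (p:ℤ) * n + r := by exact_mod_cast hab'
      have h2 : (a:ℤ) = (p:ℤ) * c := by exact_mod_cast hc
      have h3 : ((x:ℤ))^2 = (b:ℤ) := by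
        have : ((x*x : ℕ) : ℤ) = (b:ℤ) := by exact_mod_cast congrArg (Nat.cast : ℕ → ℤ) hx
        push_cast at this
        linear_combination this
      linear_combination (-1) * h3 - h1 + h2
    rw [hBmap, PowerSeries.coeff_map, theta_vanish N b (by omega) hsqb, map_zero, mul_zero]
  · -- first factor vanishes
    have hA : SuppDvd p (∏ i ∈ Finset.Icc 1 N, (((1:S) - X ^ (p*(2*i))) * (W i)^3)) := by
      apply suppDvd_prod
      intro i hi
      have hi1 : i ≠ 0 := by have := (Finset.mem_Icc.mp hi).1; omega
      apply suppDvd_mul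
      · exact suppDvd_one_sub_pow
      · refine suppDvd_pow ?_ 3
        exact suppDvd_inv (hW i hi1) suppDvd_one_sub_pow
    rw [hA a hpa, zero_mul]

end MainPart
end

section
/- Let p be a prime, let k ≥ 1 and j ≥ 0 be integers, and let r be an integer with 1 ≤ r ≤ p-1. If d_k(pn+r) ≡ 0 (mod p) for all integers n ≥ 0, then d_{pj+k}(pn+r) ≡ 0 (mod p) for all integers n ≥ 0. -/
open PowerSeries Finset

namespace PowerSeries

variable {R : Type*} [CommRing R]

theorem coeff_pow_expChar_eq_zero (p : ℕ) [ExpChar R p] (f : R⟦X⟧) {m : ℕ} (hm : ¬ p ∣ m) :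
    coeff m (f ^ p) = 0 := by
  have hp : p ≠ 0 := expChar_ne_zero R p
  have frobenius_expand : (expand p hp f).map (frobenius R p) = f ^ p :=
    MvPowerSeries.map_frobenius_expand p hp
  rw [← frobenius_expand, coeff_map, coeff_expand_of_not_dvd p hp f hm, map_zero]

theorem coeff_mul_pow_expChar_eq_zero (p : ℕ) [ExpChar R p] {f : R⟦X⟧} (g : R⟦X⟧) {n : ℕ}
    (hf : ∀ a ≤ n, a ≡ n [MOD p] → coeff a f = 0) : coeff n (f * g ^ p) = 0 := by
  rw [coeff_mul]
  refine sum_eq_zero fun ⟨a, b⟩ hab => ?_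
  rw [HasAntidiagonal.mem_antidiagonal] at hab
  by_cases hb : p ∣ b
  · obtain ⟨c, rfl⟩ := hb
    have ha : a ≡ n [MOD p] := by rw [← hab, Nat.ModEq, Nat.add_mul_mod_self_left]
    rw [hf a (by omega) ha, zero_mul]
  · rw [coeff_pow_expChar_eq_zero p g hb, mul_zero]

theorem mk_span_X_pow_X_pow {m i : ℕ} (h : m ≤ i) :
    Ideal.Quotient.mk (Ideal.span {(X : R⟦X⟧) ^ m}) (X ^ i) = 0 :=
  Ideal.Quotient.eq_zero_iff_mem.mpr (Ideal.mem_span_singleton.mpr (pow_dvd_pow X h))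

theorem coeff_mul_of_mk_eq_one {n : ℕ} (f : R⟦X⟧) {u : R⟦X⟧}
    (hu : Ideal.Quotient.mk (Ideal.span {(X : R⟦X⟧) ^ (n + 1)}) u = 1) :
    coeff n (f * u) = coeff n f := by
  have hdvd : X ^ (n + 1) ∣ f * u - f := by
    rw [← Ideal.mem_span_singleton, ← Ideal.Quotient.eq, map_mul, hu, mul_one]
  rw [← sub_eq_zero, ← map_sub]
  exact X_pow_dvd_iff.mp hdvd n n.lt_succ_self

end PowerSeries

section

variable (R : Type*) [CommRing R]

noncomputable def invOneSubXPow (i : ℕ) : R⟦X⟧ := invOfUnit (1 - X ^ i) 1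

noncomputable def diamondFactor (k i : ℕ) : R⟦X⟧ :=
  (1 - X ^ (2 * i)) ^ k * invOneSubXPow R i ^ (3 * k + 1)

noncomputable def diamondProd (k N : ℕ) : R⟦X⟧ := ∏ i ∈ Icc 1 N, diamondFactor R k i

variable {R}

theorem one_sub_X_pow_mul_invOneSubXPow {i : ℕ} (hi : 0 < i) :
    (1 - X ^ i) * invOneSubXPow R i = 1 :=
  mul_invOfUnit _ 1 (by simp [hi.ne'])

theorem map_invOneSubXPow {S : Type*} [CommRing S] (φ : R →+* S) {i : ℕ} (hi : 0 < i) :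
    map φ (invOneSubXPow R i) = invOneSubXPow S i := by
  refine left_inv_eq_right_inv ?_ (one_sub_X_pow_mul_invOneSubXPow hi)
  have hmap : map φ (1 - X ^ i) = 1 - X ^ i := by simp
  rw [mul_comm, ← hmap, ← map_mul, one_sub_X_pow_mul_invOneSubXPow hi, map_one]

theorem map_diamondProd {S : Type*} [CommRing S] (φ : R →+* S) (k N : ℕ) :
    map φ (diamondProd R k N) = diamondProd S k N := by
  rw [diamondProd, diamondProd, map_prod]
  refine prod_congr rfl fun i hi => ?_
  simp [diamondFactor, map_invOneSubXPow φ (mem_Icc.mp hi).1]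

theorem intCast_elongatedDiamond (k n : ℕ) :
    (elongatedDiamond k n : R) = coeff n (diamondProd R k n) := by
  rw [← map_diamondProd (Int.castRingHom R), coeff_map]
  rfl

theorem mk_diamondFactor (k : ℕ) {m i : ℕ} (hi : 0 < i) (hmi : m ≤ i) :
    Ideal.Quotient.mk (Ideal.span {(X : R⟦X⟧) ^ m}) (diamondFactor R k i) = 1 := by
  set π := Ideal.Quotient.mk (Ideal.span {(X : R⟦X⟧) ^ m})
  have hX : π (X ^ i) = 0 := mk_span_X_pow_X_pow hmi
  have hsub : π (1 - X ^ i) = 1 := by rw [map_sub, hX, map_one, sub_zero]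
  have hinv : π (invOneSubXPow R i) = 1 := by
    simpa [hsub] using congrArg π (one_sub_X_pow_mul_invOneSubXPow (R := R) hi)
  have hsub2 : π (1 - X ^ (2 * i)) = 1 := by
    rw [map_sub, mul_comm, pow_mul, map_pow, hX, zero_pow two_ne_zero, map_one, sub_zero]
  rw [diamondFactor, map_mul, map_pow, map_pow, hsub2, hinv, one_pow, one_pow, one_mul]

theorem coeff_diamondProd_of_le (k : ℕ) {n N : ℕ} (h : n ≤ N) :
    coeff n (diamondProd R k N) = coeff n (diamondProd R k n) := by
  have hsplit : diamondProd R k N =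
      diamondProd R k n * ∏ i ∈ Ioc n N, diamondFactor R k i :=
    (prod_Ioc_consecutive _ n.zero_le h).symm
  rw [hsplit, coeff_mul_of_mk_eq_one]
  rw [map_prod]
  refine prod_eq_one fun i hi => ?_
  have hi := mem_Ioc.mp hi
  exact mk_diamondFactor k (by omega) (by omega)

theorem diamondProd_add (m k N : ℕ) :
    diamondProd R (m + k) N =
      diamondProd R k N * (∏ i ∈ Icc 1 N, (1 - X ^ (2 * i)) * invOneSubXPow R i ^ 3) ^ m := by
  rw [diamondProd, diamondProd, ← prod_pow, ← prod_mul_distrib]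
  refine prod_congr rfl fun i _ => ?_
  rw [diamondFactor, diamondFactor, mul_pow, ← pow_mul]
  ring

end

theorem d_lift_general (p : ℕ) (hp : Nat.Prime p) (k : ℕ) (j : ℕ) (r : ℕ)
    (hr2 : r ≤ p - 1)
    (h : ∀ n : ℕ, (p : ℤ) ∣ elongatedDiamond k (p * n + r)) :
    ∀ n : ℕ, (p : ℤ) ∣ elongatedDiamond (p * j + k) (p * n + r) := by
  have : Fact p.Prime := ⟨hp⟩
  intro n
  rw [← ZMod.intCast_zmod_eq_zero_iff_dvd, intCast_elongatedDiamond, diamondProd_add,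
    mul_comm p j, pow_mul]
  refine coeff_mul_pow_expChar_eq_zero p _ fun a ha hmod => ?_
  have ha_mod : a % p = r := by
    rw [hmod, Nat.mul_add_mod, Nat.mod_eq_of_lt (by have := hp.two_le; omega)]
  rw [coeff_diamondProd_of_le k ha, ← intCast_elongatedDiamond,
    ZMod.intCast_zmod_eq_zero_iff_dvd, ← Nat.div_add_mod a p, ha_mod]
  exact h (a / p)

theorem d_lift (p : ℕ) (hp : Nat.Prime p) (k : ℕ) (hk : 1 ≤ k) (j : ℕ) (r : ℕ)
    (hr1 : 1 ≤ r) (hr2 : r ≤ p - 1)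
    (h : ∀ n : ℕ, (p : ℤ) ∣ elongatedDiamond k (p * n + r)) :
    ∀ n : ℕ, (p : ℤ) ∣ elongatedDiamond (p * j + k) (p * n + r) :=
  d_lift_general p hp k j r hr2 h
end
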